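/- arXiv:math/0510281 — 10 statements merged into one kernel-verified Lean document; each statement's English description precedes it below -/
import Mathlib

section
/- The Kleisli extension T_M is order-compatible: for all 𝔵 𝔶 : T X, 𝔵 ≤ 𝔶 if and only if k ≤ T_M 1_X 𝔵 𝔶, where 1_X : X → X → V is the identity V-matrix, 1_X x y = k if x = y and ⊥ otherwise. -/
/-!
For the identity matrix, `ρ^1 y = {y}`, so level `1` lies in the defining set of
`T_M 1_X 𝔵 𝔶` exactly when `𝔵 ≤ 𝔶 >>= pure = 𝔶`. Conversely, `k ≤ T_M 1_X 𝔵 𝔶` with `k ≠ ⊥`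
yields a level `a ≠ ⊥` in that set; then `ρ^a y ⊆ {y}`, so `η (ρ^a y) ≤ pure y` and coherence
gives `𝔵 ≤ 𝔶 >>= pure = 𝔶`.
-/

open scoped Classical

universe u v

/-- The Kleisli extension of a `Set`-monad `T` (whose values carry complete lattice
structures) along a quantale `V`: `T_M r 𝔵 𝔶 = ⨆ {a | 𝔵 ≤ 𝔶 >>= fun y => η (ρ_r^a y)}`,
where `η A = ⨆ x ∈ A, pure x` and `ρ_r^a y = {x | a ≤ r x y}`. -/
noncomputable def kleisliExt (T : Type u → Type u) [Monad T]
    [∀ A : Type u, CompleteLattice (T A)] {V : Type v} [CompleteLattice V]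
    {X Y : Type u} (r : X → Y → V) (t : T X) (s : T Y) : V :=
  sSup {a : V | t ≤ s >>= fun y => ⨆ x ∈ {x : X | a ≤ r x y}, pure x}

section IdentityMatrix

variable {V : Type v} [CompleteLattice V] {X : Type u}

lemma setOf_le_ite_bot_subset_singleton {a : V} (ha : a ≠ ⊥) (b : V) (y : X) :
    {x | a ≤ if x = y then b else ⊥} ⊆ {y} := by
  intro x hx
  rw [Set.mem_singleton_iff]
  by_contra hne
  rw [Set.mem_ofPred_eq, if_neg hne, le_bot_iff] at hx
  exact ha hx

lemma setOf_one_le_ite_bot_eq_singleton [One V] (hnt : (⊥ : V) ≠ 1) (y : X) :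
    {x | (1 : V) ≤ if x = y then 1 else ⊥} = {y} := by
  refine (setOf_le_ite_bot_subset_singleton hnt.symm 1 y).antisymm ?_
  rintro x rfl
  simp

end IdentityMatrix

section SetMonad

variable {T : Type u → Type u} [∀ A : Type u, CompleteLattice (T A)] {X : Type u}

lemma biSup_pure_le_of_subset_singleton [Pure T] {A : Set X} {y : X} (hA : A ⊆ {y}) :
    ⨆ x ∈ A, (pure x : T X) ≤ pure y :=
  iSup₂_le fun x hx => by rw [Set.mem_singleton_iff.mp (hA hx)]

lemma bind_le_self_of_le_pure [Monad T] [LawfulMonad T]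
    (hcoh : ∀ f g : X → T X, (∀ x, f x ≤ g x) → ∀ t : T X, t >>= f ≤ t >>= g)
    {f : X → T X} (hf : ∀ x, f x ≤ pure x) (t : T X) : t >>= f ≤ t :=
  (hcoh f pure hf t).trans_eq (bind_pure t)

end SetMonad

/-- The Kleisli extension is order-compatible: `𝔵 ≤ 𝔶 ↔ k ≤ T_M 1_X 𝔵 𝔶`. -/
theorem kleisliExt_order_compatible
    (T : Type u → Type u) [Monad T] [LawfulMonad T]
    [∀ A : Type u, CompleteLattice (T A)]
    (hmap : ∀ {X Y : Type u} (f : X → Y) (S : Set (T X)),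
      f <$> sSup S = ⨆ t ∈ S, f <$> t)
    (hmul : ∀ {X : Type u} (S : Set (T (T X))),
      sSup S >>= id = ⨆ t ∈ S, t >>= id)
    (hcoh : ∀ {X Y : Type u} (f g : X → T Y), (∀ x, f x ≤ g x) →
      ∀ t : T X, t >>= f ≤ t >>= g)
    (V : Type v) [CompleteLattice V] [Monoid V]
    (hl : ∀ (a : V) (S : Set V), a * sSup S = ⨆ s ∈ S, a * s)
    (hr : ∀ (a : V) (S : Set V), sSup S * a = ⨆ s ∈ S, s * a)
    (hnt : (⊥ : V) ≠ 1)
    (X : Type u) (𝔵 𝔶 : T X) :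
    𝔵 ≤ 𝔶 ↔ (1 : V) ≤ kleisliExt T (fun x y : X => if x = y then (1 : V) else ⊥) 𝔵 𝔶 := by
  constructor
  · intro hle
    refine le_sSup (?_ : 𝔵 ≤ 𝔶 >>= fun y => ⨆ x ∈ {x | (1 : V) ≤ if x = y then 1 else ⊥}, pure x)
    simpa only [setOf_one_le_ite_bot_eq_singleton hnt, Set.mem_singleton_iff, iSup_iSup_eq_left,
      bind_pure] using hle
  · intro h
    obtain ⟨a, ha, ha_ne⟩ : ∃ a ∈ {a : V | 𝔵 ≤ 𝔶 >>= fun y =>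
        ⨆ x ∈ {x | a ≤ if x = y then (1 : V) else ⊥}, pure x}, a ≠ ⊥ := by
      by_contra! hall
      exact hnt (le_bot_iff.mp (h.trans_eq (sSup_eq_bot.mpr hall))).symm
    exact ha.trans <| bind_le_self_of_le_pure hcoh
      (fun y => biSup_pure_le_of_subset_singleton (setOf_le_ite_bot_subset_singleton ha_ne 1 y)) 𝔶
end

section
/- For every a : V and every 𝔵 : T X, a ⊓ k ≤ T_M (fun x y => if x = y then a ⊓ k else ⊥) 𝔵 𝔵; equivalently, the V-matrix a_{TX} ⊓ 1_{TX} on T X (with value a ⊓ k on the diagonal and ⊥ off the diagonal) is pointwise below T_M (a_X ⊓ 1_X). -/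
open scoped Classical

universe u v

theorem le_kleisliExt_self (T : Type u → Type u) [Monad T] [LawfulMonad T]
    [∀ A : Type u, CompleteLattice (T A)] {V : Type v} [CompleteLattice V] {X : Type u}
    (hcoh : ∀ f g : X → T X, (∀ x, f x ≤ g x) → ∀ t : T X, t >>= f ≤ t >>= g)
    (r : X → X → V) (a : V) (hr : ∀ x, a ≤ r x x) (t : T X) :
    a ≤ kleisliExt T r t t := by
  have pure_le : ∀ y, (pure y : T X) ≤ ⨆ x ∈ {x : X | a ≤ r x y}, pure x :=
    fun y => le_iSup₂ (f := fun x (_ : x ∈ {x : X | a ≤ r x y}) => (pure x : T X)) y (hr y)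
  apply le_sSup
  calc t = t >>= pure := (bind_pure t).symm
    _ ≤ _ := hcoh _ _ pure_le t

/-- `(a_{TX} ⊓ 1_{TX}) ≤ T_M (a_X ⊓ 1_X)` for the Kleisli extension. -/
theorem kleisliExt_diag
    (T : Type u → Type u) [Monad T] [LawfulMonad T]
    [∀ A : Type u, CompleteLattice (T A)]
    (hmap : ∀ {X Y : Type u} (f : X → Y) (S : Set (T X)),
      f <$> sSup S = ⨆ t ∈ S, f <$> t)
    (hmul : ∀ {X : Type u} (S : Set (T (T X))),
      sSup S >>= id = ⨆ t ∈ S, t >>= id)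
    (hcoh : ∀ {X Y : Type u} (f g : X → T Y), (∀ x, f x ≤ g x) →
      ∀ t : T X, t >>= f ≤ t >>= g)
    (V : Type v) [CompleteLattice V] [Monoid V]
    (hl : ∀ (a : V) (S : Set V), a * sSup S = ⨆ s ∈ S, a * s)
    (hr : ∀ (a : V) (S : Set V), sSup S * a = ⨆ s ∈ S, s * a)
    (hnt : (⊥ : V) ≠ 1)
    (X : Type u) (a : V) (𝔵 : T X) :
    a ⊓ 1 ≤ kleisliExt T (fun x y : X => if x = y then a ⊓ 1 else ⊥) 𝔵 𝔵 :=
  le_kleisliExt_self T (fun f g => hcoh f g) _ _ (fun _ => by simp) 𝔵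
end

section
/- For every V-tower α on X, the round trip through r_α recovers α: for every a : V and y : X, ⨆ {𝔵 : T X | a ≤ ⨆ {b : V | 𝔵 ≤ α b y}} = α a y (i.e. α_{r_α} = α, where r_α 𝔵 y = ⨆ {b | 𝔵 ≤ α b y} and α_r a y = ⨆ {𝔵 | a ≤ r 𝔵 y}). -/
open scoped Classical

universe u v

/-!
Under `K0` the map `b ↦ α b y` turns suprema of `V` into infima of `T X`, so it is the lower
adjoint of an antitone Galois connection whose upper adjoint is `r_α (·) y`:
`𝔵 ≤ α b y ↔ b ≤ r_α 𝔵 y`. The set `{𝔵 | a ≤ r_α 𝔵 y}` is therefore the principal ideal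
below `α a y`, and its supremum is `α a y`.
-/

section SupToInf

variable {V L : Type*} [CompleteLattice V] [CompleteLattice L] {f : V → L}

theorem antitone_of_map_sSup_eq_iInf (hf : ∀ S : Set V, f (sSup S) = ⨅ a ∈ S, f a) :
    Antitone f := by
  intro c d hcd
  have h := hf {c, d}
  rw [sSup_pair, sup_eq_right.mpr hcd, iInf_pair] at h
  exact h ▸ inf_le_left

theorem le_apply_iff_le_sSup_of_map_sSup_eq_iInf
    (hf : ∀ S : Set V, f (sSup S) = ⨅ a ∈ S, f a) (x : L) (b : V) :
    x ≤ f b ↔ b ≤ sSup {c | x ≤ f c} := by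
  refine ⟨fun hx => le_sSup hx, fun hb => ?_⟩
  calc x ≤ ⨅ c ∈ {c | x ≤ f c}, f c := le_iInf₂ fun _ hc => hc
    _ = f (sSup {c | x ≤ f c}) := (hf _).symm
    _ ≤ f b := antitone_of_map_sSup_eq_iInf hf hb

theorem sSup_setOf_le_sSup_setOf_le_apply_eq
    (hf : ∀ S : Set V, f (sSup S) = ⨅ a ∈ S, f a) (a : V) :
    sSup {x | a ≤ sSup {b | x ≤ f b}} = f a := by
  simp_rw [← le_apply_iff_le_sSup_of_map_sSup_eq_iInf hf]
  exact csSup_Iic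

end SupToInf

/-- Round trip through `r_α` recovers the `V`-tower `α`: `α_{r_α} = α`. -/
theorem tower_roundtrip
    (T : Type u → Type u) [Monad T] [LawfulMonad T]
    [∀ A : Type u, CompleteLattice (T A)]
    (hmap : ∀ {X Y : Type u} (f : X → Y) (S : Set (T X)),
      f <$> sSup S = ⨆ t ∈ S, f <$> t)
    (hmul : ∀ {X : Type u} (S : Set (T (T X))),
      sSup S >>= id = ⨆ t ∈ S, t >>= id)
    (hcoh : ∀ {X Y : Type u} (f g : X → T Y), (∀ x, f x ≤ g x) →
      ∀ t : T X, t >>= f ≤ t >>= g)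
    (V : Type v) [CompletelyDistribLattice V] [Monoid V]
    (hl : ∀ (a : V) (S : Set V), a * sSup S = ⨆ s ∈ S, a * s)
    (hr : ∀ (a : V) (S : Set V), sSup S * a = ⨆ s ∈ S, s * a)
    (hnt : (⊥ : V) ≠ 1)
    (X : Type u) (α : V → X → T X)
    (hK0 : ∀ (S : Set V) (y : X), α (sSup S) y = ⨅ a ∈ S, α a y)
    (hK1 : ∀ y : X, pure y ≤ α 1 y)
    (hK2 : ∀ (a b : V) (y : X), (α b y >>= α a) ≤ α (a * b) y)
    (a : V) (y : X) :
    sSup {𝔵 : T X | a ≤ sSup {b : V | 𝔵 ≤ α b y}} = α a y :=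
  sSup_setOf_le_sSup_setOf_le_apply_eq (fun S => hK0 S y) a
end

section
/- For every r : X → Y → V and all A : Set X, B : Set Y: ⨆ {a : V | ∀ x ∈ A, ∃ y ∈ B, a ≤ r x y} = ⨅_{x ∈ A} ⨆_{y ∈ B} r x y. (The left-hand side is the Kleisli extension of the powerset monad applied to r, evaluated at (A, B); the right-hand side is the op-canonical extension of the powerset functor.) -/
/-!
Every `a` in the set lies below `⨆ j, f i j` for each `i`, which gives `≤` in any complete
lattice. Conversely, complete distributivity rewrites `⨅ i, ⨆ j, f i j` as the supremum over
choice functions `g` of `⨅ i, f i (g i)`, and each of these witnesses membership in the set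
through `j := g i`.
-/

theorem sSup_setOf_forall_exists_le {V ι : Type*} {κ : ι → Type*} [CompletelyDistribLattice V]
    (f : ∀ i, κ i → V) : sSup {a | ∀ i, ∃ j, a ≤ f i j} = ⨅ i, ⨆ j, f i j := by
  refine le_antisymm (sSup_le fun a ha => le_iInf fun i => ?_) ?_
  · obtain ⟨j, hj⟩ := ha i
    exact le_iSup_of_le j hj
  · rw [iInf_iSup_eq]
    exact iSup_le fun g => le_sSup fun i => ⟨g i, iInf_le _ i⟩

/-- The Kleisli extension of the powerset monad coincides with the op-canonical
extension of the powerset functor: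
`⨆ {a | ∀ x ∈ A, ∃ y ∈ B, a ≤ r x y} = ⨅_{x ∈ A} ⨆_{y ∈ B} r x y`. -/
theorem powersetKleisliExt_eq_opCanonical {V : Type*} [CompletelyDistribLattice V]
    {X Y : Type*} (r : X → Y → V) (A : Set X) (B : Set Y) :
    sSup {a : V | ∀ x ∈ A, ∃ y ∈ B, a ≤ r x y} = ⨅ x ∈ A, ⨆ y ∈ B, r x y := by
  simpa only [Subtype.forall, Subtype.exists, exists_prop, iInf_subtype', iSup_subtype']
    using sSup_setOf_forall_exists_le fun (x : A) (y : B) => r x y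
end

section
/- For every r : X → Y → V and all filters 𝔣 : Filter X, 𝔤 : Filter Y: ⨆ {a : V | ∀ B ∈ 𝔤, {x | ∃ y ∈ B, a ≤ r x y} ∈ 𝔣} = ⨅_{B ∈ 𝔤} ⨆_{A ∈ 𝔣} ⨅_{x ∈ A} ⨆_{y ∈ B} r x y. (The left-hand side is the Kleisli extension of the filter monad applied to r, evaluated at (𝔣, 𝔤); the right-hand side is the op-canonical extension of the filter functor.) -/
/-!
Complete distributivity turns `⨅ x ∈ A, ⨆ y ∈ B, r x y` into the supremum of all `a` with
`∀ x ∈ A, ∃ y ∈ B, a ≤ r x y`, so the supremum over `A ∈ 𝔣` is `sSup T_B` with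
`T_B = {a | {x | ∃ y ∈ B, a ≤ r x y} ∈ 𝔣}`. Each `T_B` is a lower set, and for lower sets
complete distributivity gives `⨅ B, sSup T_B = sSup (⋂ B, T_B)`; the intersection over `B ∈ 𝔤`
is exactly the set on the left-hand side.
-/

open Set

section CompletelyDistribLattice

variable {V : Type*} [CompletelyDistribLattice V]

theorem biInf_biSup_eq_sSup_setOf_forall_exists_le {X Y : Type*} (A : Set X) (B : Set Y)
    (r : X → Y → V) :
    ⨅ x ∈ A, ⨆ y ∈ B, r x y = sSup {a | ∀ x ∈ A, ∃ y ∈ B, a ≤ r x y} := by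
  refine le_antisymm ?_ (sSup_le fun a ha ↦ le_iInf₂ fun x hx ↦ ?_)
  · simp_rw [iInf_subtype', iSup_subtype', iInf_iSup_eq]
    exact iSup_le fun g ↦ le_sSup fun x hx ↦ ⟨g ⟨x, hx⟩, (g ⟨x, hx⟩).2, iInf_le _ (⟨x, hx⟩ : A)⟩
  · obtain ⟨y, hy, hle⟩ := ha x hx
    exact le_iSup₂_of_le y hy hle

theorem iInf_sSup_eq_sSup_iInter_of_isLowerSet {ι : Type*} {T : ι → Set V}
    (hT : ∀ i, IsLowerSet (T i)) : ⨅ i, sSup (T i) = sSup (⋂ i, T i) := by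
  refine le_antisymm ?_ (le_iInf fun i ↦ sSup_le_sSup (iInter_subset T i))
  simp_rw [sSup_eq_iSup' (T _), iInf_iSup_eq]
  exact iSup_le fun g ↦ le_sSup <| mem_iInter.2 fun i ↦ hT i (iInf_le _ i) (g i).2

theorem Filter.biSup_biInf_biSup_eq_sSup {X Y : Type*} (𝔣 : Filter X) (B : Set Y)
    (r : X → Y → V) :
    ⨆ A ∈ 𝔣, ⨅ x ∈ A, ⨆ y ∈ B, r x y = sSup {a | {x | ∃ y ∈ B, a ≤ r x y} ∈ 𝔣} := by
  simp_rw [biInf_biSup_eq_sSup_setOf_forall_exists_le, ← sSup_iUnion]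
  congr 1
  ext a
  simp only [mem_iUnion, mem_ofPred_eq, exists_prop]
  exact Filter.exists_mem_subset_iff

end CompletelyDistribLattice

/-- The Kleisli extension of the filter monad coincides with the op-canonical
extension of the filter functor:
`⨆ {a | ∀ B ∈ 𝔤, {x | ∃ y ∈ B, a ≤ r x y} ∈ 𝔣} = ⨅_{B ∈ 𝔤} ⨆_{A ∈ 𝔣} ⨅_{x ∈ A} ⨆_{y ∈ B} r x y`. -/
theorem filterKleisliExt_eq_opCanonical {V : Type*} [CompletelyDistribLattice V]
    {X Y : Type*} (r : X → Y → V) (𝔣 : Filter X) (𝔤 : Filter Y) :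
    sSup {a : V | ∀ B ∈ 𝔤, {x | ∃ y ∈ B, a ≤ r x y} ∈ 𝔣} =
      ⨅ B ∈ 𝔤, ⨆ A ∈ 𝔣, ⨅ x ∈ A, ⨆ y ∈ B, r x y := by
  have hlower (B : Set Y) : IsLowerSet {a : V | {x | ∃ y ∈ B, a ≤ r x y} ∈ 𝔣} :=
    fun a b hba ha ↦ Filter.mem_of_superset ha fun x ⟨y, hy, hle⟩ ↦ ⟨y, hy, hba.trans hle⟩
  simp_rw [Filter.biSup_biInf_biSup_eq_sSup]
  rw [iInf_subtype', iInf_sSup_eq_sSup_iInter_of_isLowerSet fun B : {B // B ∈ 𝔤} ↦ hlower B]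
  congr 1
  ext a
  simp
end

section
/- If c : Set X → X → V is a V-valued closure operator (satisfies (C1), (C2), (C3)), then γ_c : V → Set X → Set X defined by γ_c a A = {x | a ≤ c A x} is a V-graded closure operator (satisfies (Γ1), (Γ2), (Γ3), (Γ4)). -/
/-!
(Γ1)–(Γ3) are direct translations of (C1)–(C3), the last one using that `a * -` is monotone,
which follows from its preserving binary suprema. (Γ4) holds because in a completely
distributive lattice every `a` is the supremum of the elements totally below it.
-/

/-- `b` is totally below `a`: every set whose supremum dominates `a` contains an
element dominating `b`. -/
def totallyBelow {V : Type*} [CompleteLattice V] (b a : V) : Prop :=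
  ∀ S : Set V, a ≤ sSup S → ∃ s ∈ S, b ≤ s

theorem totallyBelow.le {V : Type*} [CompleteLattice V] {a b : V} (h : totallyBelow b a) :
    b ≤ a := by
  obtain ⟨s, rfl, hbs⟩ := h {a} sSup_singleton.ge
  exact hbs

theorem le_sSup_totallyBelow {V : Type*} [CompletelyDistribLattice V] (a : V) :
    a ≤ sSup {b | totallyBelow b a} := by
  -- Distribute `⨅ {sSup T | a ≤ sSup T}` over choice functions `g` picking `g T ∈ T`;
  -- each `⨅ T, g T` is totally below `a`, witnessed by `g S ∈ S`.
  have hinf : a ≤ ⨅ T : {T : Set V // a ≤ sSup T}, ⨆ t : T.1, (t : V) :=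
    le_iInf fun T => T.2.trans_eq (sSup_eq_iSup' _)
  rw [iInf_iSup_eq] at hinf
  refine hinf.trans (iSup_le fun g => le_sSup fun S hS => ?_)
  exact ⟨g ⟨S, hS⟩, (g ⟨S, hS⟩).2, iInf_le _ _⟩

theorem setOf_le_eq_iInter_totallyBelow {V X : Type*} [CompletelyDistribLattice V]
    (a : V) (f : X → V) :
    {x | a ≤ f x} = ⋂ b, ⋂ (_ : totallyBelow b a), {x | b ≤ f x} := by
  ext x
  simp only [Set.mem_iInter, Set.mem_ofPred_eq]
  exact ⟨fun hx b hb => hb.le.trans hx,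
    fun h => (le_sSup_totallyBelow a).trans (sSup_le fun b hb => h b hb)⟩

theorem mul_le_mul_left_of_mul_sSup {V : Type*} [CompleteLattice V] [Mul V]
    (hl : ∀ (a : V) (S : Set V), a * sSup S = ⨆ s ∈ S, a * s) (a : V) {u v : V}
    (huv : u ≤ v) : a * u ≤ a * v := by
  have h := hl a {u, v}
  rw [sSup_pair, sup_eq_right.mpr huv] at h
  exact h ▸ le_biSup _ (Set.mem_insert u {v})

theorem graded_of_valued_closure_general
    {V : Type*} [CompletelyDistribLattice V] [Monoid V]
    (hl : ∀ (a : V) (S : Set V), a * sSup S = ⨆ s ∈ S, a * s)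
    {X : Type*} (c : Set X → X → V)
    (hC1 : ∀ (A : Set X) (x : X), x ∈ A → (1 : V) ≤ c A x)
    (hC2 : ∀ (A B : Set X) (x : X), A ⊆ B → c A x ≤ c B x)
    (hC3 : ∀ (a : V) (A : Set X) (x : X), a * c {y | a ≤ c A y} x ≤ c A x) :
    (∀ (a : V) (A : Set X), a ≤ 1 → A ⊆ {x | a ≤ c A x})
    ∧ (∀ (a : V) (A B : Set X), A ⊆ B → {x | a ≤ c A x} ⊆ {x | a ≤ c B x})
    ∧ (∀ (a b : V) (A : Set X),
        {x | b ≤ c {y | a ≤ c A y} x} ⊆ {x | a * b ≤ c A x})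
    ∧ (∀ (a : V) (A : Set X),
        {x | a ≤ c A x} = ⋂ b, ⋂ (_ : totallyBelow b a), {x | b ≤ c A x}) :=
  ⟨fun _ A ha x hx => ha.trans (hC1 A x hx),
    fun _ A B hAB x hx => hx.trans (hC2 A B x hAB),
    fun a _ A x hx => (mul_le_mul_left_of_mul_sSup hl a hx).trans (hC3 a A x),
    fun a A => setOf_le_eq_iInter_totallyBelow a (c A)⟩

/-- If `c` is a `V`-valued closure operator, then `γ_c a A = {x | a ≤ c A x}` is a
`V`-graded closure operator: (Γ1)–(Γ4) hold. -/
theorem graded_of_valued_closure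
    {V : Type*} [CompletelyDistribLattice V] [Monoid V]
    (hl : ∀ (a : V) (S : Set V), a * sSup S = ⨆ s ∈ S, a * s)
    (hr : ∀ (a : V) (S : Set V), sSup S * a = ⨆ s ∈ S, s * a)
    (hnt : (⊥ : V) ≠ 1)
    {X : Type*} (c : Set X → X → V)
    (hC1 : ∀ (A : Set X) (x : X), x ∈ A → (1 : V) ≤ c A x)
    (hC2 : ∀ (A B : Set X) (x : X), A ⊆ B → c A x ≤ c B x)
    (hC3 : ∀ (a : V) (A : Set X) (x : X), a * c {y | a ≤ c A y} x ≤ c A x) :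
    (∀ (a : V) (A : Set X), a ≤ 1 → A ⊆ {x | a ≤ c A x})
    ∧ (∀ (a : V) (A B : Set X), A ⊆ B → {x | a ≤ c A x} ⊆ {x | a ≤ c B x})
    ∧ (∀ (a b : V) (A : Set X),
        {x | b ≤ c {y | a ≤ c A y} x} ⊆ {x | a * b ≤ c A x})
    ∧ (∀ (a : V) (A : Set X),
        {x | a ≤ c A x} = ⋂ b, ⋂ (_ : totallyBelow b a), {x | b ≤ c A x}) :=
  graded_of_valued_closure_general hl c hC1 hC2 hC3
end

section
/- If γ : V → Set X → Set X is a V-graded closure operator (satisfies (Γ1)–(Γ4)), then c_γ : Set X → X → V defined by c_γ A x = ⨆ {a : V | x ∈ γ a A} is a V-valued closure operator (satisfies (C1), (C2), (C3)). -/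
theorem totallyBelow.trans_le {V : Type*} [CompleteLattice V] {c b s : V}
    (hcb : totallyBelow c b) (hbs : b ≤ s) : totallyBelow c s :=
  fun S hS => hcb S (hbs.trans hS)

section GradedClosure

variable {V X : Type*} [CompleteLattice V] {γ : V → Set X → Set X}

theorem gradedClosure_antitone
    (hG4 : ∀ (a : V) (A : Set X), γ a A = ⋂ b, ⋂ (_ : totallyBelow b a), γ b A)
    {b s : V} (hbs : b ≤ s) (A : Set X) : γ s A ⊆ γ b A := by
  rw [hG4 b A, hG4 s A]
  simp only [Set.subset_def, Set.mem_iInter]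
  exact fun y hy c hcb => hy c (hcb.trans_le hbs)

theorem setOf_le_sSup_gradedClosure_subset
    (hG4 : ∀ (a : V) (A : Set X), γ a A = ⋂ b, ⋂ (_ : totallyBelow b a), γ b A)
    (a : V) (A : Set X) : {y | a ≤ sSup {d : V | y ∈ γ d A}} ⊆ γ a A := by
  intro y hy
  rw [hG4 a A, Set.mem_iInter₂]
  intro c hca
  obtain ⟨s, hs, hcs⟩ := hca _ hy
  exact gradedClosure_antitone hG4 hcs A hs

end GradedClosure

theorem valued_of_graded_closure_general
    {V : Type*} [CompletelyDistribLattice V] [Monoid V]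
    (hl : ∀ (a : V) (S : Set V), a * sSup S = ⨆ s ∈ S, a * s)
    {X : Type*} (γ : V → Set X → Set X)
    (hG1 : ∀ (a : V) (A : Set X), a ≤ 1 → A ⊆ γ a A)
    (hG2 : ∀ (a : V) (A B : Set X), A ⊆ B → γ a A ⊆ γ a B)
    (hG3 : ∀ (a b : V) (A : Set X), γ b (γ a A) ⊆ γ (a * b) A)
    (hG4 : ∀ (a : V) (A : Set X), γ a A = ⋂ b, ⋂ (_ : totallyBelow b a), γ b A) :
    (∀ (A : Set X) (x : X), x ∈ A → (1 : V) ≤ sSup {a : V | x ∈ γ a A})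
    ∧ (∀ (A B : Set X) (x : X), A ⊆ B →
        sSup {a : V | x ∈ γ a A} ≤ sSup {a : V | x ∈ γ a B})
    ∧ (∀ (a : V) (A : Set X) (x : X),
        a * sSup {b : V | x ∈ γ b {y | a ≤ sSup {d : V | y ∈ γ d A}}} ≤
          sSup {b : V | x ∈ γ b A}) := by
  refine ⟨fun A x hx => le_sSup (hG1 1 A le_rfl hx),
    fun A B x hAB => sSup_le_sSup fun a ha => hG2 a A B hAB ha, fun a A x => ?_⟩
  rw [hl]
  refine iSup₂_le fun b hb => le_sSup ?_
  exact hG3 a b A (hG2 b _ _ (setOf_le_sSup_gradedClosure_subset hG4 a A) hb)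

/-- If `γ` is a `V`-graded closure operator, then `c_γ A x = ⨆ {a | x ∈ γ a A}` is a
`V`-valued closure operator: (C1)–(C3) hold. -/
theorem valued_of_graded_closure
    {V : Type*} [CompletelyDistribLattice V] [Monoid V]
    (hl : ∀ (a : V) (S : Set V), a * sSup S = ⨆ s ∈ S, a * s)
    (hr : ∀ (a : V) (S : Set V), sSup S * a = ⨆ s ∈ S, s * a)
    (hnt : (⊥ : V) ≠ 1)
    {X : Type*} (γ : V → Set X → Set X)
    (hG1 : ∀ (a : V) (A : Set X), a ≤ 1 → A ⊆ γ a A)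
    (hG2 : ∀ (a : V) (A B : Set X), A ⊆ B → γ a A ⊆ γ a B)
    (hG3 : ∀ (a b : V) (A : Set X), γ b (γ a A) ⊆ γ (a * b) A)
    (hG4 : ∀ (a : V) (A : Set X), γ a A = ⋂ b, ⋂ (_ : totallyBelow b a), γ b A) :
    (∀ (A : Set X) (x : X), x ∈ A → (1 : V) ≤ sSup {a : V | x ∈ γ a A})
    ∧ (∀ (A B : Set X) (x : X), A ⊆ B →
        sSup {a : V | x ∈ γ a A} ≤ sSup {a : V | x ∈ γ a B})
    ∧ (∀ (a : V) (A : Set X) (x : X),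
        a * sSup {b : V | x ∈ γ b {y | a ≤ sSup {d : V | y ∈ γ d A}}} ≤
          sSup {b : V | x ∈ γ b A}) :=
  valued_of_graded_closure_general hl γ hG1 hG2 hG3 hG4
end

section
/- The correspondences c ↦ γ_c (γ_c a A = {x | a ≤ c A x}) and γ ↦ c_γ (c_γ A x = ⨆ {a | x ∈ γ a A}) between V-valued closure operators and V-graded closure operators are mutually inverse: for every V-valued closure operator c, every A : Set X and x : X, ⨆ {a : V | a ≤ c A x} = c A x; and for every V-graded closure operator γ, every a : V and A : Set X, {x | a ≤ ⨆ {b : V | x ∈ γ b A}} = γ a A. -/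
section TotallyBelow

variable {V : Type*} [CompleteLattice V]

theorem totallyBelow.trans_le_s13 {d b s : V} (hdb : totallyBelow d b) (hbs : b ≤ s) :
    totallyBelow d s :=
  fun S hS => hdb S (hbs.trans hS)

variable {X : Type*} {f : V → Set X}

theorem antitone_of_eq_iInter_totallyBelow
    (hf : ∀ a, f a = ⋂ b, ⋂ (_ : totallyBelow b a), f b) : Antitone f := by
  intro b s hbs x hx
  rw [hf s] at hx
  rw [hf b]
  exact Set.mem_iInter₂.2 fun d hd => Set.mem_iInter₂.1 hx d (hd.trans_le_s13 hbs)

theorem setOf_le_sSup_setOf_mem_eq (hf : ∀ a, f a = ⋂ b, ⋂ (_ : totallyBelow b a), f b)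
    (a : V) : {x | a ≤ sSup {b | x ∈ f b}} = f a := by
  ext x
  refine ⟨fun hx => ?_, fun hx => le_sSup hx⟩
  rw [hf a]
  refine Set.mem_iInter₂.2 fun b hba => ?_
  obtain ⟨s, hxs, hbs⟩ := hba _ hx
  exact antitone_of_eq_iInter_totallyBelow hf hbs hxs

end TotallyBelow

theorem closure_correspondence_roundtrips_general
    {V : Type*} [CompletelyDistribLattice V] [Monoid V]
    {X : Type*} :
    (∀ c : Set X → X → V,
      (∀ (A : Set X) (x : X), x ∈ A → (1 : V) ≤ c A x) →
      (∀ (A B : Set X) (x : X), A ⊆ B → c A x ≤ c B x) →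
      (∀ (a : V) (A : Set X) (x : X), a * c {y | a ≤ c A y} x ≤ c A x) →
      ∀ (A : Set X) (x : X), sSup {a : V | a ≤ c A x} = c A x)
    ∧ (∀ γ : V → Set X → Set X,
      (∀ (a : V) (A : Set X), a ≤ 1 → A ⊆ γ a A) →
      (∀ (a : V) (A B : Set X), A ⊆ B → γ a A ⊆ γ a B) →
      (∀ (a b : V) (A : Set X), γ b (γ a A) ⊆ γ (a * b) A) →
      (∀ (a : V) (A : Set X), γ a A = ⋂ b, ⋂ (_ : totallyBelow b a), γ b A) →
      ∀ (a : V) (A : Set X), {x | a ≤ sSup {b : V | x ∈ γ b A}} = γ a A) :=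
  ⟨fun c _ _ _ A x => csSup_Iic (a := c A x),
    fun γ _ _ _ hγ a A => setOf_le_sSup_setOf_mem_eq (fun b => hγ b A) a⟩

/-- The correspondences `c ↦ γ_c` and `γ ↦ c_γ` between `V`-valued and `V`-graded
closure operators are mutually inverse. -/
theorem closure_correspondence_roundtrips
    {V : Type*} [CompletelyDistribLattice V] [Monoid V]
    (hl : ∀ (a : V) (S : Set V), a * sSup S = ⨆ s ∈ S, a * s)
    (hr : ∀ (a : V) (S : Set V), sSup S * a = ⨆ s ∈ S, s * a)
    (hnt : (⊥ : V) ≠ 1)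
    {X : Type*} :
    (∀ c : Set X → X → V,
      (∀ (A : Set X) (x : X), x ∈ A → (1 : V) ≤ c A x) →
      (∀ (A B : Set X) (x : X), A ⊆ B → c A x ≤ c B x) →
      (∀ (a : V) (A : Set X) (x : X), a * c {y | a ≤ c A y} x ≤ c A x) →
      ∀ (A : Set X) (x : X), sSup {a : V | a ≤ c A x} = c A x)
    ∧ (∀ γ : V → Set X → Set X,
      (∀ (a : V) (A : Set X), a ≤ 1 → A ⊆ γ a A) →
      (∀ (a : V) (A B : Set X), A ⊆ B → γ a A ⊆ γ a B) →
      (∀ (a b : V) (A : Set X), γ b (γ a A) ⊆ γ (a * b) A) →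
      (∀ (a : V) (A : Set X), γ a A = ⋂ b, ⋂ (_ : totallyBelow b a), γ b A) →
      ∀ (a : V) (A : Set X), {x | a ≤ sSup {b : V | x ∈ γ b A}} = γ a A) :=
  closure_correspondence_roundtrips_general
end

section
/- If α : V → X → Set (Set X) is a V-tower for the up-set monad (each α a x is an up-set and (K0), (K1), (K2) hold), then γ_α : V → Set X → Set X defined by γ_α a A = {x | Aᶜ ∉ α a x} is a V-graded closure operator (satisfies (Γ1), (Γ2), (Γ3), (Γ4)). -/
theorem sSup_totallyBelow_eq {V : Type*} [CompletelyDistribLattice V] (a : V) :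
    sSup {b | totallyBelow b a} = a := by
  refine le_antisymm (sSup_le fun b hb => hb.le) ?_
  -- Distribute `⨅ {S | a ≤ sSup S}, sSup S` into a supremum over choice functions `g`;
  -- the infimum of the values of `g` is totally below `a`.
  have hcover : a ≤ ⨅ S : {S : Set V // a ≤ sSup S}, ⨆ s : S.1, (s : V) :=
    le_iInf fun S => sSup_eq_iSup' S.1 ▸ S.2
  rw [iInf_iSup_eq] at hcover
  refine hcover.trans (iSup_le fun g => le_sSup fun T hT => ?_)
  exact ⟨g ⟨T, hT⟩, (g ⟨T, hT⟩).2, iInf_le (fun S => (g S : V)) ⟨T, hT⟩⟩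

section Tower

variable {V X : Type*} {α : V → X → Set (Set X)}

theorem monotone_of_sSup_eq_iUnion [CompleteLattice V]
    (hK0 : ∀ (S : Set V) (x : X), α (sSup S) x = ⋃ a ∈ S, α a x) (x : X) :
    Monotone (α · x) := by
  intro a b hab A hA
  have hpair := hK0 {a, b} x
  rw [sSup_pair, sup_eq_right.mpr hab] at hpair
  show A ∈ α b x
  rw [hpair]
  exact Set.mem_biUnion (Set.mem_insert a {b}) hA

theorem eq_iUnion_totallyBelow [CompletelyDistribLattice V]
    (hK0 : ∀ (S : Set V) (x : X), α (sSup S) x = ⋃ a ∈ S, α a x) (a : V) (x : X) :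
    α a x = ⋃ b, ⋃ (_ : totallyBelow b a), α b x := by
  conv_lhs => rw [← sSup_totallyBelow_eq a, hK0]
  rfl

end Tower

theorem graded_closure_of_upset_tower_general
    {V : Type*} [CompletelyDistribLattice V] [Monoid V]
    {X : Type*} (α : V → X → Set (Set X))
    (hup : ∀ (a : V) (x : X) (A B : Set X), A ∈ α a x → A ⊆ B → B ∈ α a x)
    (hK0 : ∀ (S : Set V) (x : X), α (sSup S) x = ⋃ a ∈ S, α a x)
    (hK1 : ∀ (x : X) (A : Set X), A ∈ α 1 x → x ∈ A)
    (hK2 : ∀ (a b : V) (x : X) (A : Set X),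
      A ∈ α (a * b) x → {y | A ∈ α a y} ∈ α b x) :
    (∀ (a : V) (A : Set X), a ≤ 1 → A ⊆ {x | Aᶜ ∉ α a x})
    ∧ (∀ (a : V) (A B : Set X), A ⊆ B → {x | Aᶜ ∉ α a x} ⊆ {x | Bᶜ ∉ α a x})
    ∧ (∀ (a b : V) (A : Set X),
        {x | {y | Aᶜ ∉ α a y}ᶜ ∉ α b x} ⊆ {x | Aᶜ ∉ α (a * b) x})
    ∧ (∀ (a : V) (A : Set X),
        {x | Aᶜ ∉ α a x} = ⋂ b, ⋂ (_ : totallyBelow b a), {x | Aᶜ ∉ α b x}) := by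
  refine ⟨?_, ?_, ?_, ?_⟩
  · intro a A ha x hx hA
    exact hK1 x Aᶜ (monotone_of_sSup_eq_iUnion hK0 x ha hA) hx
  · intro a A B hAB x hx hB
    exact hx (hup a x Bᶜ Aᶜ hB (Set.compl_subset_compl.mpr hAB))
  · intro a b A x hx hA
    have hcompl : {y | Aᶜ ∉ α a y}ᶜ = {y | Aᶜ ∈ α a y} := by
      ext y; simp
    exact hx (hcompl ▸ hK2 a b x Aᶜ hA)
  · intro a A
    ext x
    simp [eq_iUnion_totallyBelow hK0 a x]

/-- If `α` is a `V`-tower for the up-set monad, then `γ_α a A = {x | Aᶜ ∉ α a x}` is a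
`V`-graded closure operator: (Γ1)–(Γ4) hold. -/
theorem graded_closure_of_upset_tower
    {V : Type*} [CompletelyDistribLattice V] [Monoid V]
    (hl : ∀ (a : V) (S : Set V), a * sSup S = ⨆ s ∈ S, a * s)
    (hr : ∀ (a : V) (S : Set V), sSup S * a = ⨆ s ∈ S, s * a)
    (hnt : (⊥ : V) ≠ 1)
    {X : Type*} (α : V → X → Set (Set X))
    (hup : ∀ (a : V) (x : X) (A B : Set X), A ∈ α a x → A ⊆ B → B ∈ α a x)
    (hK0 : ∀ (S : Set V) (x : X), α (sSup S) x = ⋃ a ∈ S, α a x)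
    (hK1 : ∀ (x : X) (A : Set X), A ∈ α 1 x → x ∈ A)
    (hK2 : ∀ (a b : V) (x : X) (A : Set X),
      A ∈ α (a * b) x → {y | A ∈ α a y} ∈ α b x) :
    (∀ (a : V) (A : Set X), a ≤ 1 → A ⊆ {x | Aᶜ ∉ α a x})
    ∧ (∀ (a : V) (A B : Set X), A ⊆ B → {x | Aᶜ ∉ α a x} ⊆ {x | Bᶜ ∉ α a x})
    ∧ (∀ (a b : V) (A : Set X),
        {x | {y | Aᶜ ∉ α a y}ᶜ ∉ α b x} ⊆ {x | Aᶜ ∉ α (a * b) x})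
    ∧ (∀ (a : V) (A : Set X),
        {x | Aᶜ ∉ α a x} = ⋂ b, ⋂ (_ : totallyBelow b a), {x | Aᶜ ∉ α b x}) :=
  graded_closure_of_upset_tower_general α hup hK0 hK1 hK2
end

section
/- The assignments α ↦ r_α and r ↦ α_r, where r_α 𝔣 y ↔ (∀ A : X → L, α y A ≤ 𝔣 A) and (α_r y) A = ⨅_{𝔣 : F_L X with r 𝔣 y} 𝔣 A, are mutually inverse bijections between: (a) the set of maps α : X → F_L X satisfying (K1) α x A ≤ A x for all x : X, A : X → L, and (K2) α x A ≤ α x (fun y => α y A) for all x : X, A : X → L (L-valued neighborhood systems, i.e. L-valued topologies on X); and (b) the set of relations r : F_L X → X → Prop satisfying (L1) r (e_X x) x for all x : X, and (L2) for all L-valued filters 𝔉 on F_L X, all g : F_L X and z : X: if (∀ Φ : F_L X → L, g (fun y => ⨅_{𝔣 : F_L X with r 𝔣 y} Φ 𝔣) ≤ 𝔉 Φ) and r g z, then r (m_X 𝔉) z ((F_L, 2)-algebra structures with respect to the Kleisli extension of the L-valued filter monad). This realizes the isomorphism Alg(F_L, 2) ≅ Top(L) on objects. -/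
/-!
A convergence relation `r` satisfying (L1) and (L2) is closed under finer filters: apply (L2)
to the pushforward of `𝔣` along `e_X`, whose multiplication is `𝔣` again. It also makes `α_r y`
converge to `y`: apply (L2) to `e_y` and the principal filter of `{𝔣 | r 𝔣 y}`, whose
multiplication is `α_r y`. Together these give `r_{α_r} = r`; (K2) for `α_r` is (L2) for the
Kleisli extension of `y ↦ {𝔣 | r 𝔣 y}`, and the other round trip is immediate.
-/

universe u v

/-- An `L`-valued filter on `X`: a map `(X → L) → L` satisfying (F1), (F2), (F3). -/
structure LFilter (L : Type v) [CompleteLattice L] (mul : L → L → L) (X : Type u) where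
  toFun : (X → L) → L
  map_top : toFun (fun _ => ⊤) = ⊤
  mono : ∀ A B : X → L, (∀ x, A x ≤ B x) → toFun A ≤ toFun B
  map_mul : ∀ A B : X → L, mul (toFun A) (toFun B) ≤ toFun fun x => mul (A x) (B x)

variable {L : Type v} [CompleteLattice L] {mul : L → L → L} {X : Type u}

/-- The unit `e_X` of the `L`-valued filter monad: `e_X x = fun A => A x`. -/
def LFilter.unit (L : Type v) [CompleteLattice L] (mul : L → L → L) (x : X) :
    LFilter L mul X where
  toFun A := A x
  map_top := rfl
  mono _ _ h := h x
  map_mul _ _ := le_refl _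

/-- The multiplication `m_X` of the `L`-valued filter monad:
`m_X 𝔉 = fun A => 𝔉 (fun 𝔣 => 𝔣 A)`. -/
def LFilter.mult (𝔉 : LFilter L mul (LFilter L mul X)) : LFilter L mul X where
  toFun A := 𝔉.toFun fun 𝔣 => 𝔣.toFun A
  map_top := by
    have h : (fun 𝔣 : LFilter L mul X => 𝔣.toFun fun _ => ⊤) = fun _ => (⊤ : L) := by
      funext 𝔣; exact 𝔣.map_top
    show 𝔉.toFun (fun 𝔣 => 𝔣.toFun fun _ => ⊤) = ⊤
    rw [h, 𝔉.map_top]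
  mono A B h := 𝔉.mono _ _ fun 𝔣 => 𝔣.mono A B h
  map_mul A B :=
    le_trans (𝔉.map_mul _ _) (𝔉.mono _ _ fun 𝔣 => 𝔣.map_mul A B)

/-- The supremum (pointwise infimum) of a set of `L`-valued filters; for
monotone `mul` it is again an `L`-valued filter. -/
def LFilter.infOn (hmono : ∀ a b c d : L, a ≤ b → c ≤ d → mul a c ≤ mul b d)
    (S : Set (LFilter L mul X)) : LFilter L mul X where
  toFun A := ⨅ 𝔣 ∈ S, 𝔣.toFun A
  map_top := by simp [LFilter.map_top]
  mono A B h := le_iInf₂ fun 𝔣 h𝔣 => le_trans (biInf_le _ h𝔣) (𝔣.mono A B h)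
  map_mul A B := le_iInf₂ fun 𝔣 h𝔣 =>
    le_trans (hmono _ _ _ _ (biInf_le _ h𝔣) (biInf_le _ h𝔣)) (𝔣.map_mul A B)

/-- `α` is an `L`-valued neighborhood system (an `L`-valued topology), i.e. a
Kleisli `F_L`-algebra structure: (K1) `e_X ≤ α` and (K2) `α ∘ α ≤ α`. -/
def IsLTopology (α : X → LFilter L mul X) : Prop :=
  (∀ (x : X) (A : X → L), (α x).toFun A ≤ A x) ∧
  (∀ (x : X) (A : X → L),
    (α x).toFun A ≤ (α x).toFun fun y => (α y).toFun A)

/-- `r` is an `(F_L,2)`-algebra structure with respect to the Kleisli extension of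
the `L`-valued filter monad: (L1) reflexivity and (L2) transitivity. -/
def IsLConvergence (r : LFilter L mul X → X → Prop) : Prop :=
  (∀ x : X, r (LFilter.unit L mul x) x) ∧
  (∀ (𝔉 : LFilter L mul (LFilter L mul X)) (g : LFilter L mul X) (z : X),
    (∀ Φ : LFilter L mul X → L,
      g.toFun (fun y => ⨅ 𝔣 ∈ {𝔣 : LFilter L mul X | r 𝔣 y}, Φ 𝔣) ≤ 𝔉.toFun Φ) →
    r g z → r (LFilter.mult 𝔉) z)

namespace LFilter

variable {Y : Type*}

def bind (𝔣 : LFilter L mul X) (k : X → LFilter L mul Y) : LFilter L mul Y where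
  toFun Φ := 𝔣.toFun fun x => (k x).toFun Φ
  map_top := by simp only [map_top]
  mono Φ Ψ h := 𝔣.mono _ _ fun x => (k x).mono Φ Ψ h
  map_mul Φ Ψ := (𝔣.map_mul _ _).trans (𝔣.mono _ _ fun x => (k x).map_mul Φ Ψ)

def principal (hmono : ∀ a b c d : L, a ≤ b → c ≤ d → mul a c ≤ mul b d) (S : Set Y) :
    LFilter L mul Y where
  toFun Φ := ⨅ y ∈ S, Φ y
  map_top := by simp
  mono Φ Ψ h := iInf₂_mono fun y _ => h y
  map_mul Φ Ψ := le_iInf₂ fun y hy => hmono _ _ _ _ (biInf_le _ hy) (biInf_le _ hy)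

theorem unit_bind (x : X) (k : X → LFilter L mul Y) : (unit L mul x).bind k = k x := rfl

theorem mult_bind_unit_unit (𝔣 : LFilter L mul X) :
    mult (𝔣.bind fun x => unit L mul (unit L mul x)) = 𝔣 := rfl

theorem mult_principal (hmono : ∀ a b c d : L, a ≤ b → c ≤ d → mul a c ≤ mul b d)
    (S : Set (LFilter L mul X)) : mult (principal hmono S) = infOn hmono S := rfl

end LFilter

open LFilter

/-- The relation `r_α`. -/
def convOfNhds (α : X → LFilter L mul X) (𝔣 : LFilter L mul X) (y : X) : Prop :=
  ∀ A : X → L, (α y).toFun A ≤ 𝔣.toFun A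

/-- The neighborhood system `α_r`. -/
def nhdsOfConv (hmono : ∀ a b c d : L, a ≤ b → c ≤ d → mul a c ≤ mul b d)
    (r : LFilter L mul X → X → Prop) (y : X) : LFilter L mul X :=
  infOn hmono {𝔣 | r 𝔣 y}

theorem IsLTopology.isLConvergence_convOfNhds {α : X → LFilter L mul X} (hα : IsLTopology α) :
    IsLConvergence (convOfNhds α) := by
  refine ⟨hα.1, fun 𝔉 g z hg hgz A => ?_⟩
  calc (α z).toFun A
      ≤ (α z).toFun fun y => (α y).toFun A := hα.2 z A
    _ ≤ g.toFun fun y => (α y).toFun A := hgz _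
    _ ≤ g.toFun fun y => ⨅ 𝔣 ∈ {𝔣 | convOfNhds α 𝔣 y}, 𝔣.toFun A :=
        g.mono _ _ fun y => le_iInf₂ fun 𝔣 h𝔣 => h𝔣 A
    _ ≤ 𝔉.toFun fun 𝔣 => 𝔣.toFun A := hg _

theorem nhdsOfConv_convOfNhds (hmono : ∀ a b c d : L, a ≤ b → c ≤ d → mul a c ≤ mul b d)
    (α : X → LFilter L mul X) (y : X) (A : X → L) :
    (nhdsOfConv hmono (convOfNhds α) y).toFun A = (α y).toFun A :=
  le_antisymm (biInf_le _ fun _ => le_rfl) (le_iInf₂ fun _ h𝔣 => h𝔣 A)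

theorem nhdsOfConv_le (hmono : ∀ a b c d : L, a ≤ b → c ≤ d → mul a c ≤ mul b d)
    {r : LFilter L mul X → X → Prop} {𝔣 : LFilter L mul X} {y : X} (h : r 𝔣 y) (A : X → L) :
    (nhdsOfConv hmono r y).toFun A ≤ 𝔣.toFun A :=
  biInf_le (fun 𝔤 : LFilter L mul X => 𝔤.toFun A) (show 𝔣 ∈ {𝔤 | r 𝔤 y} from h)

namespace IsLConvergence

variable {r : LFilter L mul X → X → Prop} (hr : IsLConvergence r)
  (hmono : ∀ a b c d : L, a ≤ b → c ≤ d → mul a c ≤ mul b d)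
include hr

theorem conv_mult_bind_principal {g : LFilter L mul X} {z : X} (hg : r g z) :
    r (mult (g.bind fun y => principal hmono {𝔣 | r 𝔣 y})) z :=
  hr.2 _ g z (fun _ => le_rfl) hg

theorem conv_nhdsOfConv (y : X) : r (nhdsOfConv hmono r y) y := by
  have h := hr.conv_mult_bind_principal hmono (hr.1 y)
  rwa [unit_bind, mult_principal] at h

theorem of_le {𝔤 𝔣 : LFilter L mul X} {y : X} (hg : r 𝔤 y)
    (hle : ∀ A, 𝔤.toFun A ≤ 𝔣.toFun A) : r 𝔣 y := by
  have h := hr.2 (𝔣.bind fun x => unit L mul (unit L mul x)) 𝔤 y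
    (fun _ => (hle _).trans (𝔣.mono _ _ fun w => biInf_le _ (hr.1 w))) hg
  rwa [mult_bind_unit_unit] at h

theorem le_nhdsOfConv_iff (𝔣 : LFilter L mul X) (y : X) :
    (∀ A, (nhdsOfConv hmono r y).toFun A ≤ 𝔣.toFun A) ↔ r 𝔣 y :=
  ⟨hr.of_le (hr.conv_nhdsOfConv hmono y), fun h => nhdsOfConv_le hmono h⟩

theorem isLTopology_nhdsOfConv : IsLTopology (nhdsOfConv hmono r) :=
  ⟨fun x => nhdsOfConv_le hmono (hr.1 x),
    fun _ A => le_iInf₂ fun _ hg => nhdsOfConv_le hmono (hr.conv_mult_bind_principal hmono hg) A⟩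

end IsLConvergence

/-- `Alg(F_L, 2) ≅ Top(L)` on objects: `α ↦ r_α` (with `r_α 𝔣 y ↔ α y ≤ 𝔣`
pointwise) and `r ↦ α_r` (with `α_r y = ⨅_{r 𝔣 y} 𝔣`) are mutually inverse
bijections between `L`-valued topologies and `(F_L,2)`-algebra structures for the
Kleisli extension of the `L`-valued filter monad. -/
theorem lTopology_equiv_lConvergence
    (hmono : ∀ a b c d : L, a ≤ b → c ≤ d → mul a c ≤ mul b d) :
    (∀ α : X → LFilter L mul X, IsLTopology α →
      IsLConvergence fun (𝔣 : LFilter L mul X) (y : X) =>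
        ∀ A : X → L, (α y).toFun A ≤ 𝔣.toFun A)
    ∧ (∀ r : LFilter L mul X → X → Prop, IsLConvergence r →
      IsLTopology fun y => LFilter.infOn hmono {𝔣 | r 𝔣 y})
    ∧ (∀ α : X → LFilter L mul X, IsLTopology α →
      ∀ (y : X) (A : X → L),
        (LFilter.infOn hmono
            {𝔣 : LFilter L mul X |
              ∀ B : X → L, (α y).toFun B ≤ 𝔣.toFun B}).toFun A =
          (α y).toFun A)
    ∧ (∀ r : LFilter L mul X → X → Prop, IsLConvergence r →
      ∀ (𝔣 : LFilter L mul X) (y : X),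
        (∀ A : X → L,
            (LFilter.infOn hmono {𝔤 | r 𝔤 y}).toFun A ≤ 𝔣.toFun A) ↔ r 𝔣 y) :=
  ⟨fun _ hα => hα.isLConvergence_convOfNhds,
    fun _ hr => hr.isLTopology_nhdsOfConv hmono,
    fun α _ => nhdsOfConv_convOfNhds hmono α,
    fun _ hr => hr.le_nhdsOfConv_iff hmono⟩
end
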